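/- arXiv:2003.07549 — 10 statements merged into one kernel-verified Lean document; each statement's English description precedes it below -/
import Mathlib

section
/- For any point v ∈ ℝ^p, let x_v ∈ S be an optimal solution of problem (P²(v)) (minimize g_v over S) and t_v = g_v(x_v) its optimal value. Then w_v = v + t_v·d̂ is a weakly nondominated point of Y⁺ (i.e. w_v ∈ WMin Y⁺), and x_v is a weakly efficient solution of (QVP) (i.e. x_v ∈ S_WE). -/
/-!
Write `g_v(y) = max_j (y_j - v_j) / d_j`, so that `y ≤ v + g_v(y) d` componentwise, with the
maximum attained at some index. If some `y ∈ Y` had `y < v + t d` with `t = g_v(f x_v)` the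
optimal value, then `g_v(y) < t`, contradicting optimality. Both conclusions reduce to this:
a point of `Y⁺` strictly below `v + t d` lies above such a `y`, and `f x < f x_v ≤ v + t d`.
-/

open Pointwise

/-- The nonnegative orthant `ℝ₊^p`. -/
def posOrthant (p : ℕ) : Set (Fin p → ℝ) := {y | ∀ j, 0 ≤ y j}

/-- The set of weakly nondominated points of `Q`. -/
def wMinSet {p : ℕ} (Q : Set (Fin p → ℝ)) : Set (Fin p → ℝ) :=
  {q ∈ Q | ¬ ∃ q' ∈ Q, ∀ j, q' j < q j}

section Chebyshev

variable {ι : Type*} [Finite ι] {v d : ι → ℝ}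

noncomputable def chebyshevScalarization (v d y : ι → ℝ) : ℝ := ⨆ j, (y j - v j) / d j

lemma le_add_chebyshevScalarization_mul (hd : ∀ j, 0 < d j) (y : ι → ℝ) (j : ι) :
    y j ≤ v j + chebyshevScalarization v d y * d j := by
  have hj := le_ciSup (Set.finite_range fun j => (y j - v j) / d j).bddAbove j
  rw [div_le_iff₀ (hd j)] at hj
  unfold chebyshevScalarization
  linarith

lemma chebyshevScalarization_lt_of_forall_lt [Nonempty ι] (hd : ∀ j, 0 < d j) {y : ι → ℝ}
    {t : ℝ} (h : ∀ j, y j < v j + t * d j) : chebyshevScalarization v d y < t := by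
  obtain ⟨j, hj⟩ := exists_eq_ciSup_of_finite (f := fun j => (y j - v j) / d j)
  rw [chebyshevScalarization, ← hj, div_lt_iff₀ (hd j)]
  linarith [h j]

variable [Nonempty ι] {Y : Set (ι → ℝ)} {y₀ : ι → ℝ}

lemma not_exists_lt_add_mul_of_isMinOn (hd : ∀ j, 0 < d j)
    (hmin : IsMinOn (chebyshevScalarization v d) Y y₀) :
    ¬ ∃ y ∈ Y, ∀ j, y j < v j + chebyshevScalarization v d y₀ * d j := by
  rintro ⟨y, hy, hlt⟩
  exact (isMinOn_iff.1 hmin y hy).not_gt (chebyshevScalarization_lt_of_forall_lt hd hlt)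

lemma not_exists_lt_of_isMinOn (hd : ∀ j, 0 < d j)
    (hmin : IsMinOn (chebyshevScalarization v d) Y y₀) : ¬ ∃ y ∈ Y, ∀ j, y j < y₀ j := by
  rintro ⟨y, hy, hlt⟩
  exact not_exists_lt_add_mul_of_isMinOn hd hmin
    ⟨y, hy, fun j => (hlt j).trans_le (le_add_chebyshevScalarization_mul hd y₀ j)⟩

end Chebyshev

lemma add_chebyshevScalarization_smul_mem_wMinSet {p : ℕ} [Nonempty (Fin p)]
    {v d y₀ : Fin p → ℝ} {Y : Set (Fin p → ℝ)} (hd : ∀ j, 0 < d j) (hy₀ : y₀ ∈ Y)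
    (hmin : IsMinOn (chebyshevScalarization v d) Y y₀) :
    v + chebyshevScalarization v d y₀ • d ∈ wMinSet (Y + posOrthant p) := by
  set t := chebyshevScalarization v d y₀
  refine ⟨⟨y₀, hy₀, v + t • d - y₀, fun j => ?_, add_sub_cancel y₀ _⟩, ?_⟩
  · simpa using le_add_chebyshevScalarization_mul hd y₀ j
  · rintro ⟨_, ⟨y, hy, r, hr, rfl⟩, hlt⟩
    refine not_exists_lt_add_mul_of_isMinOn hd hmin ⟨y, hy, fun j => ?_⟩
    have hj := hlt j
    simp only [Pi.add_apply, Pi.smul_apply, smul_eq_mul] at hj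
    linarith [hr j]

theorem stmt_5_general {n p : ℕ} (hp : 2 ≤ p)
    (S : Set (Fin n → ℝ))
    (f : (Fin n → ℝ) → (Fin p → ℝ))
    (d : Fin p → ℝ) (hd : ∀ j, 0 < d j) (v : Fin p → ℝ)
    (xv : Fin n → ℝ) (hxv : xv ∈ S)
    (hopt : ∀ x ∈ S, (⨆ j, (f xv j - v j) / d j) ≤ ⨆ j, (f x j - v j) / d j) :
    v + (⨆ j, (f xv j - v j) / d j) • d ∈ wMinSet (f '' S + posOrthant p) ∧
      ¬ ∃ x ∈ S, ∀ j, f x j < f xv j := by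
  have : Nonempty (Fin p) := ⟨⟨0, by omega⟩⟩
  have hmin : IsMinOn (chebyshevScalarization v d) (f '' S) (f xv) :=
    isMinOn_iff.2 (Set.forall_mem_image.2 hopt)
  refine ⟨add_chebyshevScalarization_smul_mem_wMinSet hd (Set.mem_image_of_mem f hxv) hmin, ?_⟩
  rintro ⟨x, hx, hlt⟩
  exact not_exists_lt_of_isMinOn hd hmin ⟨f x, Set.mem_image_of_mem f hx, hlt⟩

theorem stmt_5 {n p : ℕ} (hn : 1 ≤ n) (hp : 2 ≤ p)
    (S : Set (Fin n → ℝ)) (hSne : S.Nonempty) (hSconv : Convex ℝ S) (hScomp : IsCompact S)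
    (f : (Fin n → ℝ) → (Fin p → ℝ)) (hfcont : Continuous f)
    (hfsqc : ∀ i, ∀ x1 ∈ S, ∀ x2 ∈ S, ∀ l : ℝ, 0 < l → l < 1 →
      f x1 i < f x2 i → f (l • x1 + (1 - l) • x2) i < f x2 i)
    (d : Fin p → ℝ) (hd : ∀ j, 0 < d j) (v : Fin p → ℝ)
    (xv : Fin n → ℝ) (hxv : xv ∈ S)
    (hopt : ∀ x ∈ S, (⨆ j, (f xv j - v j) / d j) ≤ ⨆ j, (f x j - v j) / d j) :
    v + (⨆ j, (f xv j - v j) / d j) • d ∈ wMinSet (f '' S + posOrthant p) ∧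
      ¬ ∃ x ∈ S, ∀ j, f x j < f xv j :=
  stmt_5_general hp S f d hd v xv hxv hopt
end

section
/- Any nonempty compact conormal set is the intersection of a family of copolyblocks: if Q ⊆ [m,M] is nonempty, compact and conormal, then Q equals the intersection of all copolyblocks in [m,M] that contain Q; equivalently, for every y ∈ [m,M] with y ∉ Q there exists a copolyblock P ⊆ [m,M] with Q ⊆ P and y ∉ P. -/
/-- The box `[a, b]` in `ℝ^p`. -/
def box {p : ℕ} (a b : Fin p → ℝ) : Set (Fin p → ℝ) := {z | a ≤ z ∧ z ≤ b}

/-- The copolyblock with vertex set `V` in the box `[m, M]`: `⋃_{v ∈ V} [v, M]`. -/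
def copolyblock {p : ℕ} (V : Set (Fin p → ℝ)) (M : Fin p → ℝ) : Set (Fin p → ℝ) :=
  ⋃ v ∈ V, box v M

/-!
If `y ∉ Q`, conormality says that no point of `Q` lies below `y`, so every `q ∈ Q` exceeds `y`
in some coordinate `i` and lies in an open half-space `{z | t < z i}` with `y i < t`. By
compactness finitely many of these half-spaces cover `Q`. Inside `[m, M]` the half-space
`{z | t ≤ z i}` is the box `[m[i ↦ t], M]`, so the vertices `m[i ↦ t]` span a copolyblock
containing `Q`, and it misses `y` because `y i < t` for each of them.
-/

open Set

def IsConormal {p : ℕ} (Q : Set (Fin p → ℝ)) (M : Fin p → ℝ) : Prop :=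
  ∀ y ∈ Q, box y M ⊆ Q

section

variable {p : ℕ}

lemma mem_copolyblock {V : Set (Fin p → ℝ)} {M z : Fin p → ℝ} :
    z ∈ copolyblock V M ↔ ∃ v ∈ V, z ∈ box v M := by
  simp only [copolyblock, mem_iUnion₂, exists_prop]

lemma copolyblock_singleton (v M : Fin p → ℝ) : copolyblock {v} M = box v M := by
  simp only [copolyblock, mem_singleton_iff, iUnion_iUnion_eq_left]

lemma update_mem_box {m M : Fin p → ℝ} (hmM : m ≤ M) {i : Fin p} {t : ℝ}
    (hm : m i ≤ t) (hM : t ≤ M i) : Function.update m i t ∈ box m M :=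
  ⟨le_update_iff.2 ⟨hm, fun _ _ => le_rfl⟩,
    update_le_iff.2 ⟨hM, fun j _ => hmM j⟩⟩

lemma mem_box_update_of_le {m M z : Fin p → ℝ} {i : Fin p} {t : ℝ}
    (hz : z ∈ box m M) (ht : t ≤ z i) : z ∈ box (Function.update m i t) M :=
  ⟨update_le_iff.2 ⟨ht, fun j _ => hz.1 j⟩, hz.2⟩

lemma le_apply_of_mem_box_update {m M z : Fin p → ℝ} {i : Fin p} {t : ℝ}
    (hz : z ∈ box (Function.update m i t) M) : t ≤ z i := by
  simpa only [Function.update_self] using hz.1 i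

lemma IsConormal.exists_lt_apply {Q : Set (Fin p → ℝ)} {M y q : Fin p → ℝ}
    (hQ : IsConormal Q M) (hyM : y ≤ M) (hyQ : y ∉ Q) (hq : q ∈ Q) : ∃ i, y i < q i := by
  by_contra! hqy
  exact hyQ (hQ q hq ⟨hqy, hyM⟩)

theorem IsConormal.exists_copolyblock_separating {Q : Set (Fin p → ℝ)} {m M y : Fin p → ℝ}
    (hQ : IsConormal Q M) (hQsub : Q ⊆ box m M) (hQne : Q.Nonempty) (hQcomp : IsCompact Q)
    (hy : y ∈ box m M) (hyQ : y ∉ Q) :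
    ∃ V : Set (Fin p → ℝ), V.Finite ∧ V.Nonempty ∧ V ⊆ box m M ∧
      Q ⊆ copolyblock V M ∧ y ∉ copolyblock V M := by
  let cuts : Set (Fin p × ℝ) := {c | y c.1 < c.2 ∧ c.2 ≤ M c.1}
  have hcover : Q ⊆ ⋃ c ∈ cuts, {z | c.2 < z c.1} := by
    intro q hq
    obtain ⟨i, hi⟩ := hQ.exists_lt_apply hy.2 hyQ hq
    have hqM : q i ≤ M i := (hQsub hq).2 i
    exact mem_iUnion₂.2 ⟨(i, (y i + q i) / 2), ⟨by linarith, by linarith⟩,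
      show (y i + q i) / 2 < q i by linarith⟩
  obtain ⟨s, hs, hsfin, hQs⟩ := hQcomp.elim_finite_subcover_image
    (fun c _ => isOpen_lt continuous_const (continuous_apply c.1)) hcover
  let vertex : Fin p × ℝ → (Fin p → ℝ) := fun c => Function.update m c.1 c.2
  refine ⟨vertex '' s, hsfin.image vertex, ?_, ?_, ?_, ?_⟩
  · obtain ⟨q, hq⟩ := hQne
    obtain ⟨c, hc, -⟩ := mem_iUnion₂.1 (hQs hq)
    exact ⟨vertex c, mem_image_of_mem vertex hc⟩
  · rintro _ ⟨c, hc, rfl⟩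
    exact update_mem_box (hy.1.trans hy.2) ((hy.1 c.1).trans (hs hc).1.le) (hs hc).2
  · intro q hq
    obtain ⟨c, hc, hqc⟩ := mem_iUnion₂.1 (hQs hq)
    exact mem_copolyblock.2 ⟨vertex c, mem_image_of_mem vertex hc,
      mem_box_update_of_le (hQsub hq) (le_of_lt hqc)⟩
  · intro hyV
    obtain ⟨_, ⟨c, hc, rfl⟩, hyc⟩ := mem_copolyblock.1 hyV
    exact (le_apply_of_mem_box_update hyc).not_gt (hs hc).1

end

theorem stmt_9_general {p : ℕ}
    (m M : Fin p → ℝ) (hmM : m ≤ M)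
    (Q : Set (Fin p → ℝ)) (hQsub : Q ⊆ box m M)
    (hQne : Q.Nonempty) (hQcomp : IsCompact Q)
    (hQconormal : ∀ y ∈ Q, box y M ⊆ Q) :
    (Q = ⋂₀ {P | ∃ V : Set (Fin p → ℝ), V.Finite ∧ V.Nonempty ∧ V ⊆ box m M ∧
        P = copolyblock V M ∧ Q ⊆ P}) ∧
      (∀ y ∈ box m M, y ∉ Q →
        ∃ V : Set (Fin p → ℝ), V.Finite ∧ V.Nonempty ∧ V ⊆ box m M ∧
          Q ⊆ copolyblock V M ∧ y ∉ copolyblock V M) := by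
  have separate := fun y (hy : y ∈ box m M) (hyQ : y ∉ Q) =>
    IsConormal.exists_copolyblock_separating hQconormal hQsub hQne hQcomp hy hyQ
  refine ⟨subset_antisymm (fun q hq P ⟨_, _, _, _, hP, hQP⟩ => hP ▸ hQP hq) ?_, separate⟩
  intro y hy
  have hym : y ∈ box m M := hy _ ⟨{m}, finite_singleton m, singleton_nonempty m,
    singleton_subset_iff.2 ⟨le_rfl, hmM⟩, (copolyblock_singleton m M).symm, hQsub⟩
  by_contra hyQ
  obtain ⟨V, hVfin, hVne, hVsub, hQV, hyV⟩ := separate y hym hyQ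
  exact hyV (hy _ ⟨V, hVfin, hVne, hVsub, rfl, hQV⟩)

theorem stmt_9 {p : ℕ} (hp : 2 ≤ p)
    (m M : Fin p → ℝ) (hmM : m ≤ M)
    (Q : Set (Fin p → ℝ)) (hQsub : Q ⊆ box m M)
    (hQne : Q.Nonempty) (hQcomp : IsCompact Q)
    (hQconormal : ∀ y ∈ Q, box y M ⊆ Q) :
    (Q = ⋂₀ {P | ∃ V : Set (Fin p → ℝ), V.Finite ∧ V.Nonempty ∧ V ⊆ box m M ∧
        P = copolyblock V M ∧ Q ⊆ P}) ∧
      (∀ y ∈ box m M, y ∉ Q →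
        ∃ V : Set (Fin p → ℝ), V.Finite ∧ V.Nonempty ∧ V ⊆ box m M ∧
          Q ⊆ copolyblock V M ∧ y ∉ copolyblock V M) :=
  stmt_9_general m M hmM Q hQsub hQne hQcomp hQconormal
end

section
/- Cutting a copolyblock by a cutting cone yields the copolyblock with the updated vertex set: let P = ⋃_{u∈V}[u,M] be a copolyblock with finite vertex set V ⊆ [m,M], let v ∈ V, and let w ∈ ℝ^p satisfy v < w ≤ M; assume v is the only element u of V with u < w. Then P \ (w − int ℝ₊^p) = ⋃_{u∈V'}[u,M], where V' = (V \ {v}) ∪ {v + (w_i − v_i)e^i : i = 1,…,p} and e^i denotes the i-th standard unit vector of ℝ^p. -/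
section Copolyblock

variable {p : ℕ}

lemma add_smul_single_sub_eq_update (v w : Fin p → ℝ) (i : Fin p) :
    v + (w i - v i) • (Pi.single i (1 : ℝ) : Fin p → ℝ) = Function.update v i (w i) := by
  ext j
  rcases eq_or_ne j i with rfl | hji
  · simp
  · simp [hji]

lemma copolyblock_union (V W : Set (Fin p → ℝ)) (M : Fin p → ℝ) :
    copolyblock (V ∪ W) M = copolyblock V M ∪ copolyblock W M :=
  Set.biUnion_union V W _

lemma copolyblock_range {ι : Type*} (f : ι → Fin p → ℝ) (M : Fin p → ℝ) :
    copolyblock (Set.range f) M = ⋃ i, box (f i) M :=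
  Set.biUnion_range

lemma copolyblock_eq_box_union_diff {V : Set (Fin p → ℝ)} {v : Fin p → ℝ} (hv : v ∈ V)
    (M : Fin p → ℝ) : copolyblock V M = box v M ∪ copolyblock (V \ {v}) M := by
  conv_lhs => rw [← Set.insert_eq_of_mem hv, ← Set.insert_sdiff_singleton]
  exact Set.biUnion_insert v (V \ {v}) _

lemma box_diff_lowerOrthant {v w : Fin p → ℝ} (hvw : v ≤ w) (M : Fin p → ℝ) :
    box v M \ {y | ∀ j, y j < w j} = ⋃ i, box (Function.update v i (w i)) M := by
  ext y
  simp only [box, Set.mem_sdiff, Set.mem_ofPred_eq, Set.mem_iUnion, update_le_iff, not_forall,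
    not_lt]
  constructor
  · rintro ⟨⟨hvy, hyM⟩, i, hwy⟩
    exact ⟨i, ⟨hwy, fun j _ ↦ hvy j⟩, hyM⟩
  · rintro ⟨i, ⟨hwy, hvy⟩, hyM⟩
    refine ⟨⟨fun j ↦ ?_, hyM⟩, i, hwy⟩
    rcases eq_or_ne j i with rfl | hji
    · exact (hvw j).trans hwy
    · exact hvy j hji

lemma disjoint_copolyblock_lowerOrthant {V : Set (Fin p → ℝ)} {w : Fin p → ℝ}
    (hV : ∀ u ∈ V, ¬ ∀ j, u j < w j) (M : Fin p → ℝ) :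
    Disjoint (copolyblock V M) {y | ∀ j, y j < w j} :=
  Set.disjoint_iUnion₂_left.mpr fun u hu ↦ Set.disjoint_left.mpr fun _ ⟨huy, _⟩ hyw ↦
    hV u hu fun j ↦ (huy j).trans_lt (hyw j)

end Copolyblock

theorem stmt_10_general {p : ℕ}
    (M : Fin p → ℝ)
    (V : Set (Fin p → ℝ))
    (v : Fin p → ℝ) (hv : v ∈ V)
    (w : Fin p → ℝ) (hvw : ∀ j, v j < w j)
    (huniq : ∀ u ∈ V, (∀ j, u j < w j) → u = v) :
    copolyblock V M \ {y | ∀ j, y j < w j} =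
      copolyblock ((V \ {v}) ∪
        Set.range (fun i : Fin p => v + (w i - v i) • (Pi.single i (1 : ℝ) : Fin p → ℝ))) M := by
  have hrest : Disjoint (copolyblock (V \ {v}) M) {y | ∀ j, y j < w j} :=
    disjoint_copolyblock_lowerOrthant (fun u hu hlt ↦ hu.2 (huniq u hu.1 hlt)) M
  simp only [add_smul_single_sub_eq_update, copolyblock_union, copolyblock_range,
    copolyblock_eq_box_union_diff hv M, Set.union_sdiff_distrib, hrest.sdiff_eq_left,
    box_diff_lowerOrthant fun j ↦ (hvw j).le, Set.union_comm]

theorem stmt_10 {p : ℕ} (hp : 2 ≤ p)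
    (m M : Fin p → ℝ) (hmM : m ≤ M)
    (V : Set (Fin p → ℝ)) (hfin : V.Finite) (hsub : V ⊆ box m M)
    (v : Fin p → ℝ) (hv : v ∈ V)
    (w : Fin p → ℝ) (hvw : ∀ j, v j < w j) (hwM : w ≤ M)
    (huniq : ∀ u ∈ V, (∀ j, u j < w j) → u = v) :
    copolyblock V M \ {y | ∀ j, y j < w j} =
      copolyblock ((V \ {v}) ∪
        Set.range (fun i : Fin p => v + (w i - v i) • (Pi.single i (1 : ℝ) : Fin p → ℝ))) M :=
  stmt_10_general M V v hv w hvw huniq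
end

section
/- For each v ∈ [m,M] with v ∉ Y⋄, the Euclidean distance from v to Y⋄ equals the Euclidean distance from v to Y⁺: d(v, Y⋄) = d(v, Y⁺), where d(v,Q) = inf_{y∈Q} ‖v − y‖. -/
/-! Truncating a point of `Y⁺` componentwise at `M` keeps it in `Y⁺` (since `Y ≤ M`) and puts it
below `M`, hence in `Y⋄`; for `v ≤ M` it moves no coordinate away from `v`. So every point of `Y⁺`
is dominated, in distance to `v`, by a point of the subset `Y⋄`, and the two distances agree. -/

open Metric

theorem Metric.infDist_eq_of_subset_of_forall_exists_dist_le {α : Type*} [PseudoMetricSpace α]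
    {s t : Set α} {x : α} (hst : s ⊆ t) (h : ∀ y ∈ t, ∃ z ∈ s, dist x z ≤ dist x y) :
    infDist x s = infDist x t := by
  refine congrArg ENNReal.toReal (le_antisymm ?_ (infEDist_anti hst))
  refine le_infEDist.2 fun y hy => ?_
  obtain ⟨z, hz, hzy⟩ := h y hy
  calc infEDist x s ≤ edist x z := infEDist_le_edist_of_mem hz
    _ ≤ edist x y := by simpa only [edist_dist] using ENNReal.ofReal_le_ofReal hzy

theorem EuclideanSpace.dist_le_dist_of_forall_abs_sub_le {ι : Type*} [Fintype ι]
    {v w y : EuclideanSpace ℝ ι} (h : ∀ j, |v j - w j| ≤ |v j - y j|) :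
    dist v w ≤ dist v y := by
  simp only [EuclideanSpace.dist_eq, Real.dist_eq]
  exact Real.sqrt_le_sqrt <| Finset.sum_le_sum fun j _ =>
    pow_le_pow_left₀ (abs_nonneg _) (h j) 2

def EuclideanSpace.truncate {ι : Type*} (M y : EuclideanSpace ℝ ι) : EuclideanSpace ℝ ι :=
  WithLp.toLp 2 fun j => min (y j) (M j)

theorem EuclideanSpace.dist_truncate_le {ι : Type*} [Fintype ι] {M v : EuclideanSpace ℝ ι}
    (hv : ∀ j, v j ≤ M j) (y : EuclideanSpace ℝ ι) :
    dist v (truncate M y) ≤ dist v y := by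
  refine dist_le_dist_of_forall_abs_sub_le fun j => ?_
  have h := abs_min_sub_min_le_max (v j) (M j) (y j) (M j)
  rwa [min_eq_left (hv j), sub_self, abs_zero, max_eq_left (abs_nonneg _)] at h

theorem stmt_11_general {n p : ℕ}
    (S : Set (EuclideanSpace ℝ (Fin n)))
    (f : EuclideanSpace ℝ (Fin n) → EuclideanSpace ℝ (Fin p))
    (m M : EuclideanSpace ℝ (Fin p)) (hbox : ∀ x ∈ S, ∀ j, m j ≤ f x j ∧ f x j ≤ M j)
    (v : EuclideanSpace ℝ (Fin p)) (hv : ∀ j, m j ≤ v j ∧ v j ≤ M j) :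
    Metric.infDist v ({y : EuclideanSpace ℝ (Fin p) | ∃ x ∈ S, ∀ j, f x j ≤ y j} ∩
        {y : EuclideanSpace ℝ (Fin p) | ∀ j, y j ≤ M j}) =
      Metric.infDist v {y : EuclideanSpace ℝ (Fin p) | ∃ x ∈ S, ∀ j, f x j ≤ y j} := by
  refine infDist_eq_of_subset_of_forall_exists_dist_le Set.inter_subset_left ?_
  rintro y ⟨x, hxS, hxy⟩
  refine ⟨EuclideanSpace.truncate M y, ⟨⟨x, hxS, fun j => ?_⟩, fun j => min_le_right _ _⟩,
    EuclideanSpace.dist_truncate_le (fun j => (hv j).2) y⟩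
  exact le_min (hxy j) (hbox x hxS j).2

theorem stmt_11 {n p : ℕ} (hn : 1 ≤ n) (hp : 2 ≤ p)
    (S : Set (EuclideanSpace ℝ (Fin n))) (hSne : S.Nonempty)
    (hSconv : Convex ℝ S) (hScomp : IsCompact S)
    (f : EuclideanSpace ℝ (Fin n) → EuclideanSpace ℝ (Fin p)) (hfcont : Continuous f)
    (hfsqc : ∀ i, ∀ x1 ∈ S, ∀ x2 ∈ S, ∀ l : ℝ, 0 < l → l < 1 →
      f x1 i < f x2 i → f (l • x1 + (1 - l) • x2) i < f x2 i)
    (m M : EuclideanSpace ℝ (Fin p)) (hbox : ∀ x ∈ S, ∀ j, m j ≤ f x j ∧ f x j ≤ M j)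
    (v : EuclideanSpace ℝ (Fin p)) (hv : ∀ j, m j ≤ v j ∧ v j ≤ M j)
    (hvnot : v ∉ {y : EuclideanSpace ℝ (Fin p) | ∃ x ∈ S, ∀ j, f x j ≤ y j} ∩
      {y : EuclideanSpace ℝ (Fin p) | ∀ j, y j ≤ M j}) :
    Metric.infDist v ({y : EuclideanSpace ℝ (Fin p) | ∃ x ∈ S, ∀ j, f x j ≤ y j} ∩
        {y : EuclideanSpace ℝ (Fin p) | ∀ j, y j ≤ M j}) =
      Metric.infDist v {y : EuclideanSpace ℝ (Fin p) | ∃ x ∈ S, ∀ j, f x j ≤ y j} :=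
  stmt_11_general S f m M hbox v hv
end

section
/- Let P = ⋃_{v∈V}[v,M] be a copolyblock with finite nonempty vertex set V ⊆ [m,M] such that Y⋄ ⊆ P. For each v ∈ V, let t_v be the optimal value of problem (P²(v)), i.e. t_v = min_{x∈S} max_{1≤j≤p} (f_j(x) − v_j)/d̂_j, and set w_v = v + t_v·d̂. Then the Hausdorff distance between P and Y⋄ satisfies d_H(P, Y⋄) ≤ max_{v∈V} ‖w_v − v‖. -/
/-!
Every point of `Y⋄` lies in `P`, so only the distance from a point `z ∈ [v, M]` of `P` to `Y⋄`
needs bounding. A minimiser `x` of `(P²(v))` satisfies `f x ≤ v + t_v • d̂`, so the componentwise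
maximum `y = max z (f x)` lies in `Y⋄` and `0 ≤ y - z ≤ |t_v • d̂|` componentwise; hence
`‖z - y‖ ≤ ‖t_v • d̂‖ = ‖w_v - v‖`.
-/

theorem EuclideanSpace.norm_le_norm_of_forall_abs_le {ι : Type*} [Fintype ι]
    {u w : EuclideanSpace ℝ ι} (h : ∀ j, |u j| ≤ |w j|) : ‖u‖ ≤ ‖w‖ := by
  rw [EuclideanSpace.norm_eq, EuclideanSpace.norm_eq]
  gcongr with j
  exact h j

theorem sub_le_mul_of_iSup_div_le {ι : Type*} [Finite ι] {y v d : ι → ℝ} {t : ℝ}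
    (hd : ∀ j, 0 < d j) (h : (⨆ j, (y j - v j) / d j) ≤ t) (j : ι) :
    y j - v j ≤ t * d j :=
  (div_le_iff₀ (hd j)).1 <| (le_ciSup (Set.finite_range _).bddAbove j).trans h

theorem EuclideanSpace.dist_max_le {ι : Type*} [Fintype ι] {z y v e : EuclideanSpace ℝ ι}
    (hz : ∀ j, v j ≤ z j) (hy : ∀ j, y j ≤ v j + e j) :
    dist z (WithLp.toLp 2 fun j => max (z j) (y j)) ≤ ‖e‖ := by
  rw [dist_eq_norm]
  refine norm_le_norm_of_forall_abs_le fun j => ?_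
  have hdiff : (z - WithLp.toLp 2 fun j => max (z j) (y j)) j = z j - max (z j) (y j) := rfl
  rw [hdiff, abs_sub_comm, abs_of_nonneg (sub_nonneg.2 (le_max_left _ _)), ← max_sub_sub_right,
    sub_self]
  exact max_le (abs_nonneg _) ((by linarith [hz j, hy j] : y j - z j ≤ e j).trans (le_abs_self _))

theorem stmt_12_general {n p : ℕ}
    (S : Set (EuclideanSpace ℝ (Fin n)))
    (f : EuclideanSpace ℝ (Fin n) → EuclideanSpace ℝ (Fin p))
    (m M : EuclideanSpace ℝ (Fin p)) (hbox : ∀ x ∈ S, ∀ j, m j ≤ f x j ∧ f x j ≤ M j)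
    (d : EuclideanSpace ℝ (Fin p)) (hd : ∀ j, 0 < d j)
    -- the copolyblock `P` with vertex set `V ⊆ [m, M]`
    (V : Finset (EuclideanSpace ℝ (Fin p))) (hVne : V.Nonempty)
    -- `Y⋄ ⊆ P`
    (hYP : ({y : EuclideanSpace ℝ (Fin p) | ∃ x ∈ S, ∀ j, f x j ≤ y j} ∩
        {y : EuclideanSpace ℝ (Fin p) | ∀ j, y j ≤ M j}) ⊆
      ⋃ v ∈ V, {z : EuclideanSpace ℝ (Fin p) | ∀ j, v j ≤ z j ∧ z j ≤ M j})
    -- `t_v` is the optimal value of `(P²(v))`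
    (tv : EuclideanSpace ℝ (Fin p) → ℝ)
    (htv : ∀ v ∈ V, IsLeast ((fun x => ⨆ j, (f x j - v j) / d j) '' S) (tv v)) :
    Metric.hausdorffDist
        (⋃ v ∈ V, {z : EuclideanSpace ℝ (Fin p) | ∀ j, v j ≤ z j ∧ z j ≤ M j})
        ({y : EuclideanSpace ℝ (Fin p) | ∃ x ∈ S, ∀ j, f x j ≤ y j} ∩
          {y : EuclideanSpace ℝ (Fin p) | ∀ j, y j ≤ M j}) ≤
      V.sup' hVne fun v => ‖(v + tv v • d) - v‖ := by
  have hr : 0 ≤ V.sup' hVne fun v => ‖(v + tv v • d) - v‖ :=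
    (norm_nonneg _).trans (V.le_sup' (fun v => ‖(v + tv v • d) - v‖) hVne.choose_spec)
  refine Metric.hausdorffDist_le_of_mem_dist hr ?_
    fun y hy => ⟨y, hYP hy, (dist_self y).trans_le hr⟩
  intro z hz
  obtain ⟨v, hv, hzv⟩ := Set.mem_iUnion₂.1 hz
  obtain ⟨⟨x, hxS, hxt⟩, -⟩ := htv v hv
  have hfx : ∀ j, f x j ≤ v j + (tv v • d) j := fun j => by
    have := sub_le_mul_of_iSup_div_le hd hxt.le j
    simp only [PiLp.smul_apply, smul_eq_mul]
    linarith
  refine ⟨WithLp.toLp 2 fun j => max (z j) (f x j),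
    ⟨⟨x, hxS, fun j => le_max_right _ _⟩, fun j => max_le (hzv j).2 (hbox x hxS j).2⟩, ?_⟩
  calc _ ≤ ‖tv v • d‖ := EuclideanSpace.dist_max_le (fun j => (hzv j).1) hfx
    _ = ‖(v + tv v • d) - v‖ := by rw [add_sub_cancel_left]
    _ ≤ _ := V.le_sup' (fun v => ‖(v + tv v • d) - v‖) hv

theorem stmt_12 {n p : ℕ} (hn : 1 ≤ n) (hp : 2 ≤ p)
    (S : Set (EuclideanSpace ℝ (Fin n))) (hSne : S.Nonempty)
    (hSconv : Convex ℝ S) (hScomp : IsCompact S)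
    (f : EuclideanSpace ℝ (Fin n) → EuclideanSpace ℝ (Fin p)) (hfcont : Continuous f)
    (hfsqc : ∀ i, ∀ x1 ∈ S, ∀ x2 ∈ S, ∀ l : ℝ, 0 < l → l < 1 →
      f x1 i < f x2 i → f (l • x1 + (1 - l) • x2) i < f x2 i)
    (m M : EuclideanSpace ℝ (Fin p)) (hbox : ∀ x ∈ S, ∀ j, m j ≤ f x j ∧ f x j ≤ M j)
    (d : EuclideanSpace ℝ (Fin p)) (hd : ∀ j, 0 < d j)
    -- the copolyblock `P` with vertex set `V ⊆ [m, M]`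
    (V : Finset (EuclideanSpace ℝ (Fin p))) (hVne : V.Nonempty)
    (hVsub : ∀ v ∈ V, ∀ j, m j ≤ v j ∧ v j ≤ M j)
    -- `Y⋄ ⊆ P`
    (hYP : ({y : EuclideanSpace ℝ (Fin p) | ∃ x ∈ S, ∀ j, f x j ≤ y j} ∩
        {y : EuclideanSpace ℝ (Fin p) | ∀ j, y j ≤ M j}) ⊆
      ⋃ v ∈ V, {z : EuclideanSpace ℝ (Fin p) | ∀ j, v j ≤ z j ∧ z j ≤ M j})
    -- `t_v` is the optimal value of `(P²(v))`
    (tv : EuclideanSpace ℝ (Fin p) → ℝ)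
    (htv : ∀ v ∈ V, IsLeast ((fun x => ⨆ j, (f x j - v j) / d j) '' S) (tv v)) :
    Metric.hausdorffDist
        (⋃ v ∈ V, {z : EuclideanSpace ℝ (Fin p) | ∀ j, v j ≤ z j ∧ z j ≤ M j})
        ({y : EuclideanSpace ℝ (Fin p) | ∃ x ∈ S, ∀ j, f x j ≤ y j} ∩
          {y : EuclideanSpace ℝ (Fin p) | ∀ j, y j ≤ M j}) ≤
      V.sup' hVne fun v => ‖(v + tv v • d) - v‖ :=
  stmt_12_general S f m M hbox d hd V hVne hYP tv htv
end

section
/- For each v ∈ [m,M] with v ∉ Y⋄, letting t_v and t_m denote the optimal values of problems (P²(v)) and (P²(m)) respectively, one has 0 < t_v ≤ t_m, and the point w_v = v + t_v·d̂ lies in the box [m, M'], where M' = M + t_m·d̂; in particular M' > M. -/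
/-!
Let `x₀` attain `t_v`. If `f x₀ ≤ v` then `v ∈ Y⋄`, so some coordinate of `f x₀ - v` is positive
and `t_v > 0`. Lowering the reference point from `v` to `m` can only raise the objective, so
`t_v ≤ g_v(x₁) ≤ g_m(x₁) = t_m` for a minimiser `x₁` of `(P²(m))`. The box bounds on
`v + t_v d̂` then follow from `m ≤ v ≤ M` and `0 < t_v ≤ t_m`.
-/

theorem IsLeast.le_of_image_le {α β : Type*} [Preorder β] {S : Set α} {g h : α → β} {a b : β}
    (hg : IsLeast (g '' S) a) (hh : IsLeast (h '' S) b) (hgh : ∀ x ∈ S, g x ≤ h x) : a ≤ b := by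
  obtain ⟨⟨x, hxS, rfl⟩, -⟩ := hh
  exact (hg.2 ⟨x, hxS, rfl⟩).trans (hgh x hxS)

section Scalarization

variable {ι : Type*} [Finite ι]

/-- The objective of `(P²(v))` at the outcome `y`, for the direction `d`. -/
noncomputable def scalarize (d v y : ι → ℝ) : ℝ := ⨆ j, (y j - v j) / d j

theorem le_scalarize (d v y : ι → ℝ) (j : ι) : (y j - v j) / d j ≤ scalarize d v y :=
  le_ciSup (f := fun j => (y j - v j) / d j) (Finite.bddAbove_range _) j

theorem scalarize_pos_of_not_le {d v y : ι → ℝ} (hd : ∀ j, 0 < d j) (hyv : ¬ y ≤ v) :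
    0 < scalarize d v y := by
  obtain ⟨j, hj⟩ : ∃ j, v j < y j := by simpa [Pi.le_def] using hyv
  exact (div_pos (sub_pos.mpr hj) (hd j)).trans_le (le_scalarize d v y j)

theorem scalarize_anti {d v w : ι → ℝ} (hd : ∀ j, 0 < d j) (hwv : w ≤ v) (y : ι → ℝ) :
    scalarize d v y ≤ scalarize d w y :=
  ciSup_mono (Finite.bddAbove_range _) fun j =>
    div_le_div_of_nonneg_right (by linarith [hwv j]) (hd j).le

end Scalarization

theorem stmt_13_general {n p : ℕ}
    (S : Set (Fin n → ℝ))
    (f : (Fin n → ℝ) → (Fin p → ℝ))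
    (m M : Fin p → ℝ)
    (d : Fin p → ℝ) (hd : ∀ j, 0 < d j)
    (v : Fin p → ℝ) (hv : m ≤ v ∧ v ≤ M)
    (hvnot : v ∉ {y : Fin p → ℝ | ∃ x ∈ S, ∀ j, f x j ≤ y j} ∩ {y | y ≤ M})
    -- `t_v` and `t_m` are the optimal values of `(P²(v))` and `(P²(m))`
    (tv tm : ℝ)
    (htv : IsLeast ((fun x => ⨆ j, (f x j - v j) / d j) '' S) tv)
    (htm : IsLeast ((fun x => ⨆ j, (f x j - m j) / d j) '' S) tm) :
    0 < tv ∧ tv ≤ tm ∧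
      (∀ j, m j ≤ v j + tv * d j) ∧ (∀ j, v j + tv * d j ≤ M j + tm * d j) ∧
      (∀ j, M j < M j + tm * d j) := by
  change IsLeast ((fun x => scalarize d v (f x)) '' S) tv at htv
  change IsLeast ((fun x => scalarize d m (f x)) '' S) tm at htm
  have htv_pos : 0 < tv := by
    obtain ⟨⟨x₀, hx₀S, rfl⟩, -⟩ := htv
    exact scalarize_pos_of_not_le hd fun hle => hvnot ⟨⟨x₀, hx₀S, hle⟩, hv.2⟩
  have htv_le : tv ≤ tm :=
    htv.le_of_image_le htm fun x _ => scalarize_anti hd hv.1 (f x)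
  refine ⟨htv_pos, htv_le, fun j => ?_, fun j => ?_, fun j => ?_⟩
  · nlinarith [hv.1 j, mul_pos htv_pos (hd j)]
  · nlinarith [hv.2 j, mul_le_mul_of_nonneg_right htv_le (hd j).le]
  · nlinarith [mul_pos (htv_pos.trans_le htv_le) (hd j)]

theorem stmt_13 {n p : ℕ} (hn : 1 ≤ n) (hp : 2 ≤ p)
    (S : Set (Fin n → ℝ)) (hSne : S.Nonempty) (hSconv : Convex ℝ S) (hScomp : IsCompact S)
    (f : (Fin n → ℝ) → (Fin p → ℝ)) (hfcont : Continuous f)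
    (hfsqc : ∀ i, ∀ x1 ∈ S, ∀ x2 ∈ S, ∀ l : ℝ, 0 < l → l < 1 →
      f x1 i < f x2 i → f (l • x1 + (1 - l) • x2) i < f x2 i)
    (m M : Fin p → ℝ) (hbox : ∀ x ∈ S, m ≤ f x ∧ f x ≤ M)
    (d : Fin p → ℝ) (hd : ∀ j, 0 < d j)
    (v : Fin p → ℝ) (hv : m ≤ v ∧ v ≤ M)
    (hvnot : v ∉ {y : Fin p → ℝ | ∃ x ∈ S, ∀ j, f x j ≤ y j} ∩ {y | y ≤ M})
    -- `t_v` and `t_m` are the optimal values of `(P²(v))` and `(P²(m))`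
    (tv tm : ℝ)
    (htv : IsLeast ((fun x => ⨆ j, (f x j - v j) / d j) '' S) tv)
    (htm : IsLeast ((fun x => ⨆ j, (f x j - m j) / d j) '' S) tm) :
    0 < tv ∧ tv ≤ tm ∧
      (∀ j, m j ≤ v j + tv * d j) ∧ (∀ j, v j + tv * d j ≤ M j + tm * d j) ∧
      (∀ j, M j < M j + tm * d j) :=
  stmt_13_general S f m M d hd v hv hvnot tv tm htv htm
end

section
/- For any copolyblock Q = ⋃_{v∈V}[v,M] with finite nonempty vertex set V ⊆ [m,M], the set of weakly nondominated points of Q equals the intersection of the topological boundary of Q⁺ = Q + ℝ₊^p with the set M − ℝ₊^p: WMin Q = ∂Q⁺ ∩ (M − ℝ₊^p). -/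
/-!
Adding the orthant turns `Q` into the upper set `Q⁺`, whose interior consists exactly of the
points strictly dominating some point of `Q`; hence `WMin Q = Q \ int Q⁺` for every `Q`. For a
copolyblock, `Q⁺` is the upper closure of the finite vertex set, so it is closed and `Q` is its
part below `M`; then `∂Q⁺ ∩ (M - ℝ₊^p) = (Q⁺ \ int Q⁺) ∩ (M - ℝ₊^p) = Q \ int Q⁺`.
-/

open Pointwise

open Set

lemma exists_forall_lt_of_mem_interior {ι : Type*} [Fintype ι] {s : Set (ι → ℝ)} {y : ι → ℝ}
    (hy : y ∈ interior s) : ∃ x ∈ s, ∀ i, x i < y i := by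
  obtain ⟨ε, hε, hball⟩ := Metric.mem_nhds_iff.1 (mem_interior_iff_mem_nhds.1 hy)
  refine ⟨fun i => y i - ε / 2, hball ?_, fun i => by linarith⟩
  rw [Metric.mem_ball, dist_pi_lt_iff hε]
  intro i
  rw [Real.dist_eq, sub_sub_cancel_left, abs_neg, abs_of_pos (half_pos hε)]
  exact half_lt_self hε

section Orthant

variable {p : ℕ}

lemma subset_add_posOrthant (Q : Set (Fin p → ℝ)) : Q ⊆ Q + posOrthant p :=
  fun q hq => ⟨q, hq, 0, fun _ => le_rfl, add_zero q⟩

lemma le_of_mem_add_posOrthant {Q : Set (Fin p → ℝ)} {x : Fin p → ℝ}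
    (hx : x ∈ Q + posOrthant p) : ∃ q ∈ Q, q ≤ x := by
  obtain ⟨q, hq, r, hr, rfl⟩ := hx
  exact ⟨q, hq, le_add_of_nonneg_right hr⟩

lemma isUpperSet_add_posOrthant (Q : Set (Fin p → ℝ)) : IsUpperSet (Q + posOrthant p) := by
  rintro x y hxy ⟨q, hq, r, hr, rfl⟩
  exact ⟨q, hq, y - q, fun j => sub_nonneg.2 ((le_add_of_nonneg_right (hr j)).trans (hxy j)),
    add_sub_cancel q y⟩

lemma mem_interior_add_posOrthant_iff {Q : Set (Fin p → ℝ)} {y : Fin p → ℝ} :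
    y ∈ interior (Q + posOrthant p) ↔ ∃ q ∈ Q, ∀ j, q j < y j := by
  constructor
  · intro hy
    obtain ⟨x, hx, hxy⟩ := exists_forall_lt_of_mem_interior hy
    obtain ⟨q, hq, hqx⟩ := le_of_mem_add_posOrthant hx
    exact ⟨q, hq, fun j => (hqx j).trans_lt (hxy j)⟩
  · rintro ⟨q, hq, hqy⟩
    exact (isUpperSet_add_posOrthant Q).mem_interior_of_forall_lt
      (subset_closure (subset_add_posOrthant Q hq)) hqy

lemma wMinSet_eq_diff_interior (Q : Set (Fin p → ℝ)) :
    wMinSet Q = Q \ interior (Q + posOrthant p) := by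
  ext y
  simp only [wMinSet, mem_ofPred_eq, mem_sdiff, mem_interior_add_posOrthant_iff]

end Orthant

section Copolyblock

variable {p : ℕ} {V : Set (Fin p → ℝ)} {M : Fin p → ℝ}

lemma copolyblock_eq_upperClosure_inter_Iic :
    copolyblock V M = (upperClosure V : Set (Fin p → ℝ)) ∩ Iic M := by
  ext y
  simp only [copolyblock, box, mem_iUnion₂, mem_ofPred_eq, mem_inter_iff, SetLike.mem_coe,
    mem_upperClosure, mem_Iic, exists_and_right, exists_prop]

lemma copolyblock_add_posOrthant (hV : ∀ v ∈ V, v ≤ M) :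
    copolyblock V M + posOrthant p = upperClosure V := by
  refine Subset.antisymm ?_ ?_
  · intro x hx
    obtain ⟨q, hq, hqx⟩ := le_of_mem_add_posOrthant hx
    rw [copolyblock_eq_upperClosure_inter_Iic] at hq
    exact (upperClosure V).upper hqx hq.1
  · intro y hy
    obtain ⟨v, hv, hvy⟩ := mem_upperClosure.1 hy
    refine (isUpperSet_add_posOrthant _) hvy (subset_add_posOrthant _ ?_)
    rw [copolyblock_eq_upperClosure_inter_Iic]
    exact ⟨subset_upperClosure hv, hV v hv⟩

end Copolyblock

theorem stmt_14_general {p : ℕ}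
    (m M : Fin p → ℝ)
    (V : Set (Fin p → ℝ)) (hfin : V.Finite) (hsub : V ⊆ box m M) :
    wMinSet (copolyblock V M) =
      frontier (copolyblock V M + posOrthant p) ∩ {y | y ≤ M} := by
  have hQ := copolyblock_add_posOrthant fun v hv => (hsub hv).2
  have hclosed : IsClosed (copolyblock V M + posOrthant p) :=
    hQ ▸ hfin.isClosed.upperClosure_pi hfin.bddBelow
  rw [wMinSet_eq_diff_interior, hclosed.frontier_eq, hQ]
  nth_rewrite 1 [copolyblock_eq_upperClosure_inter_Iic]
  exact inter_sdiff_right_comm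

theorem stmt_14 {p : ℕ} (hp : 2 ≤ p)
    (m M : Fin p → ℝ) (hmM : m ≤ M)
    (V : Set (Fin p → ℝ)) (hfin : V.Finite) (hne : V.Nonempty) (hsub : V ⊆ box m M) :
    wMinSet (copolyblock V M) =
      frontier (copolyblock V M + posOrthant p) ∩ {y | y ≤ M} :=
  stmt_14_general m M V hfin hsub
end

section
/- The set of weakly nondominated points of Y⋄ equals the intersection of the topological boundary of Y⁺ with M − ℝ₊^p: WMin Y⋄ = ∂Y⁺ ∩ (M − ℝ₊^p). -/
open Pointwise

/-!
`Y⁺ = f(S) + ℝ₊^p` is an upper set, and it is closed as the sum of a compact and a closed set.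
A point strictly above some point of the closure of an upper set lies in its interior, while an
interior point strictly dominates nearby points of the set; hence for a closed upper set the weakly
nondominated points below `M` are exactly its boundary points below `M`.
-/

open Set Filter Topology

lemma posOrthant_eq_Ici (p : ℕ) : posOrthant p = Ici 0 := rfl

lemma exists_forall_lt_mem_of_mem_interior {ι : Type*} {s : Set (ι → ℝ)} {x : ι → ℝ}
    (hx : x ∈ interior s) : ∃ y ∈ s, ∀ i, y i < x i := by
  have hshift : Tendsto (fun t : ℝ => x - Function.const ι t) (𝓝[>] 0) (𝓝 x) :=
    ((continuous_const.sub (continuous_pi fun _ => continuous_id)).tendsto' 0 x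
      (by ext; simp)).mono_left nhdsWithin_le_nhds
  obtain ⟨t, hts, ht⟩ :=
    ((hshift.eventually (mem_interior_iff_mem_nhds.1 hx)).and self_mem_nhdsWithin).exists
  exact ⟨_, hts, fun i => sub_lt_self (x i) ht⟩

section WeaklyNondominated

variable {p : ℕ} {U : Set (Fin p → ℝ)} {M q : Fin p → ℝ}

lemma mem_frontier_of_mem_wMinSet (hq : q ∈ wMinSet (U ∩ {y | y ≤ M})) : q ∈ frontier U := by
  obtain ⟨⟨hqU, hqM⟩, hnd⟩ := hq
  refine ⟨subset_closure hqU, fun hint => hnd ?_⟩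
  obtain ⟨y, hyU, hyq⟩ := exists_forall_lt_mem_of_mem_interior hint
  exact ⟨y, ⟨hyU, fun i => (hyq i).le.trans (hqM i)⟩, hyq⟩

lemma mem_wMinSet_of_mem_frontier (hU : IsUpperSet U) (hUc : IsClosed U)
    (hq : q ∈ frontier U) (hqM : q ≤ M) : q ∈ wMinSet (U ∩ {y | y ≤ M}) := by
  refine ⟨⟨hUc.frontier_subset hq, hqM⟩, ?_⟩
  rintro ⟨y, ⟨hyU, -⟩, hyq⟩
  exact hq.2 (hU.mem_interior_of_forall_lt (subset_closure hyU) hyq)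

theorem wMinSet_inter_Iic_eq_frontier_inter (hU : IsUpperSet U) (hUc : IsClosed U) :
    wMinSet (U ∩ {y | y ≤ M}) = frontier U ∩ {y | y ≤ M} := by
  ext q
  exact ⟨fun hq => ⟨mem_frontier_of_mem_wMinSet hq, hq.1.2⟩,
    fun hq => mem_wMinSet_of_mem_frontier hU hUc hq.1 hq.2⟩

end WeaklyNondominated

theorem stmt_15_general {n p : ℕ}
    (S : Set (Fin n → ℝ)) (hScomp : IsCompact S)
    (f : (Fin n → ℝ) → (Fin p → ℝ)) (hfcont : Continuous f)
    (M : Fin p → ℝ) :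
    wMinSet ((f '' S + posOrthant p) ∩ {y | y ≤ M}) =
      frontier (f '' S + posOrthant p) ∩ {y | y ≤ M} := by
  rw [posOrthant_eq_Ici]
  exact wMinSet_inter_Iic_eq_frontier_inter (isUpperSet_Ici 0).add_left
    (isClosed_Ici.add_left_of_isCompact (hScomp.image hfcont))

theorem stmt_15 {n p : ℕ} (hn : 1 ≤ n) (hp : 2 ≤ p)
    (S : Set (Fin n → ℝ)) (hSne : S.Nonempty) (hSconv : Convex ℝ S) (hScomp : IsCompact S)
    (f : (Fin n → ℝ) → (Fin p → ℝ)) (hfcont : Continuous f)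
    (hfsqc : ∀ i, ∀ x1 ∈ S, ∀ x2 ∈ S, ∀ l : ℝ, 0 < l → l < 1 →
      f x1 i < f x2 i → f (l • x1 + (1 - l) • x2) i < f x2 i)
    (m M : Fin p → ℝ) (hbox : ∀ x ∈ S, m ≤ f x ∧ f x ≤ M) :
    wMinSet ((f '' S + posOrthant p) ∩ {y | y ≤ M}) =
      frontier (f '' S + posOrthant p) ∩ {y | y ≤ M} :=
  stmt_15_general S hScomp f hfcont M
end

section
/- Let ϵ > 0, let e = (1,…,1) ∈ ℝ^p, and let U ⊆ ℝ^p satisfy Y⋄ ⊆ U ⊆ Y⋄ + ϵ·B, where B is the closed Euclidean unit ball of ℝ^p. Define U_ε = {q ∈ U : (q − ϵe − int ℝ₊^p) ∩ U = ∅} and ES = ⋃_{y ∈ U_ε ∩ Y⋄} {x ∈ S : f(x) ≤ y}. Then S_WE ⊆ ES ⊆ S_ε, where S_ε = {x̄ ∈ S : there is no x ∈ S with f(x) < f(x̄) − ϵe} is the set of weakly ε-efficient solutions of (QVP). -/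
open Pointwise

/-! A weakly efficient `x` is covered by the witness `y = f x`: a point `q ∈ U` with
`q < f x − ϵe` lies within `ϵ` of `Y⋄` in every coordinate, so it sits above some `f x'`
with `f x' ≤ q + ϵe < f x`. Conversely, if `y ∈ U_ε` dominates `f x` and `f x' < f x − ϵe`,
then `f x' ∈ Y⋄ ⊆ U` lies strictly below `y − ϵe`, which `U_ε` forbids. -/

lemma exists_le_add_of_mem_add_smul_closedBall {ι : Type*} [Fintype ι]
    {A : Set (EuclideanSpace ℝ ι)} {ε : ℝ} (hε : 0 ≤ ε) {q : EuclideanSpace ℝ ι}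
    (hq : q ∈ A + ε • Metric.closedBall 0 1) : ∃ a ∈ A, ∀ j, a j ≤ q j + ε := by
  obtain ⟨a, ha, _, ⟨c, hc, rfl⟩, rfl⟩ := hq
  refine ⟨a, ha, fun j => ?_⟩
  have hcj : -1 ≤ c j :=
    neg_le_of_abs_le ((PiLp.norm_apply_le c j).trans (mem_closedBall_zero_iff.mp hc))
  simp only [PiLp.add_apply, PiLp.smul_apply, smul_eq_mul]
  nlinarith

theorem stmt_17_general {n p : ℕ}
    (S : Set (EuclideanSpace ℝ (Fin n)))
    (f : EuclideanSpace ℝ (Fin n) → EuclideanSpace ℝ (Fin p))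
    (m M : EuclideanSpace ℝ (Fin p)) (hbox : ∀ x ∈ S, ∀ j, m j ≤ f x j ∧ f x j ≤ M j)
    (eps : ℝ) (heps : 0 < eps)
    (U : Set (EuclideanSpace ℝ (Fin p)))
    -- `Y⋄ ⊆ U ⊆ Y⋄ + ϵ·B` with `B` the closed Euclidean unit ball
    (hU1 : ({y : EuclideanSpace ℝ (Fin p) | ∃ x ∈ S, ∀ j, f x j ≤ y j} ∩
        {y : EuclideanSpace ℝ (Fin p) | ∀ j, y j ≤ M j}) ⊆ U)
    (hU2 : U ⊆ ({y : EuclideanSpace ℝ (Fin p) | ∃ x ∈ S, ∀ j, f x j ≤ y j} ∩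
        {y : EuclideanSpace ℝ (Fin p) | ∀ j, y j ≤ M j}) +
      eps • Metric.closedBall (0 : EuclideanSpace ℝ (Fin p)) 1) :
    -- `S_WE ⊆ ES ⊆ S_ε` where
    -- `U_ε = {q ∈ U ∣ (q − ϵe − int ℝ₊^p) ∩ U = ∅}` and
    -- `ES = ⋃_{y ∈ U_ε ∩ Y⋄} {x ∈ S ∣ f(x) ≤ y}`
    ({x ∈ S | ¬ ∃ x' ∈ S, ∀ j, f x' j < f x j} ⊆
      {x ∈ S | ∃ y, (y ∈ {q ∈ U | ¬ ∃ q' ∈ U, ∀ j, q' j < q j - eps} ∩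
          ({y : EuclideanSpace ℝ (Fin p) | ∃ x' ∈ S, ∀ j, f x' j ≤ y j} ∩
            {y : EuclideanSpace ℝ (Fin p) | ∀ j, y j ≤ M j})) ∧ ∀ j, f x j ≤ y j}) ∧
    ({x ∈ S | ∃ y, (y ∈ {q ∈ U | ¬ ∃ q' ∈ U, ∀ j, q' j < q j - eps} ∩
          ({y : EuclideanSpace ℝ (Fin p) | ∃ x' ∈ S, ∀ j, f x' j ≤ y j} ∩
            {y : EuclideanSpace ℝ (Fin p) | ∀ j, y j ≤ M j})) ∧ ∀ j, f x j ≤ y j} ⊆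
      {x ∈ S | ¬ ∃ x' ∈ S, ∀ j, f x' j < f x j - eps}) := by
  have hY : ∀ x ∈ S, f x ∈ {y : EuclideanSpace ℝ (Fin p) | ∃ x' ∈ S, ∀ j, f x' j ≤ y j} ∩
      {y | ∀ j, y j ≤ M j} :=
    fun x hx => ⟨⟨x, hx, fun _ => le_rfl⟩, fun j => (hbox x hx j).2⟩
  constructor
  · rintro x ⟨hxS, hWE⟩
    refine ⟨hxS, f x, ⟨⟨hU1 (hY x hxS), ?_⟩, hY x hxS⟩, fun _ => le_rfl⟩
    rintro ⟨q, hqU, hq⟩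
    obtain ⟨z, ⟨⟨x', hx'S, hx'z⟩, -⟩, hzq⟩ :=
      exists_le_add_of_mem_add_smul_closedBall heps.le (hU2 hqU)
    exact hWE ⟨x', hx'S, fun j => by linarith [hx'z j, hzq j, hq j]⟩
  · rintro x ⟨hxS, y, ⟨⟨-, hy⟩, -⟩, hxy⟩
    refine ⟨hxS, ?_⟩
    rintro ⟨x', hx'S, hx'⟩
    exact hy ⟨f x', hU1 (hY x' hx'S), fun j => by linarith [hx' j, hxy j]⟩

theorem stmt_17 {n p : ℕ} (hn : 1 ≤ n) (hp : 2 ≤ p)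
    (S : Set (EuclideanSpace ℝ (Fin n))) (hSne : S.Nonempty)
    (hSconv : Convex ℝ S) (hScomp : IsCompact S)
    (f : EuclideanSpace ℝ (Fin n) → EuclideanSpace ℝ (Fin p)) (hfcont : Continuous f)
    (hfsqc : ∀ i, ∀ x1 ∈ S, ∀ x2 ∈ S, ∀ l : ℝ, 0 < l → l < 1 →
      f x1 i < f x2 i → f (l • x1 + (1 - l) • x2) i < f x2 i)
    (m M : EuclideanSpace ℝ (Fin p)) (hbox : ∀ x ∈ S, ∀ j, m j ≤ f x j ∧ f x j ≤ M j)
    (eps : ℝ) (heps : 0 < eps)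
    (U : Set (EuclideanSpace ℝ (Fin p)))
    -- `Y⋄ ⊆ U ⊆ Y⋄ + ϵ·B` with `B` the closed Euclidean unit ball
    (hU1 : ({y : EuclideanSpace ℝ (Fin p) | ∃ x ∈ S, ∀ j, f x j ≤ y j} ∩
        {y : EuclideanSpace ℝ (Fin p) | ∀ j, y j ≤ M j}) ⊆ U)
    (hU2 : U ⊆ ({y : EuclideanSpace ℝ (Fin p) | ∃ x ∈ S, ∀ j, f x j ≤ y j} ∩
        {y : EuclideanSpace ℝ (Fin p) | ∀ j, y j ≤ M j}) +
      eps • Metric.closedBall (0 : EuclideanSpace ℝ (Fin p)) 1) :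
    -- `S_WE ⊆ ES ⊆ S_ε` where
    -- `U_ε = {q ∈ U ∣ (q − ϵe − int ℝ₊^p) ∩ U = ∅}` and
    -- `ES = ⋃_{y ∈ U_ε ∩ Y⋄} {x ∈ S ∣ f(x) ≤ y}`
    ({x ∈ S | ¬ ∃ x' ∈ S, ∀ j, f x' j < f x j} ⊆
      {x ∈ S | ∃ y, (y ∈ {q ∈ U | ¬ ∃ q' ∈ U, ∀ j, q' j < q j - eps} ∩
          ({y : EuclideanSpace ℝ (Fin p) | ∃ x' ∈ S, ∀ j, f x' j ≤ y j} ∩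
            {y : EuclideanSpace ℝ (Fin p) | ∀ j, y j ≤ M j})) ∧ ∀ j, f x j ≤ y j}) ∧
    ({x ∈ S | ∃ y, (y ∈ {q ∈ U | ¬ ∃ q' ∈ U, ∀ j, q' j < q j - eps} ∩
          ({y : EuclideanSpace ℝ (Fin p) | ∃ x' ∈ S, ∀ j, f x' j ≤ y j} ∩
            {y : EuclideanSpace ℝ (Fin p) | ∀ j, y j ≤ M j})) ∧ ∀ j, f x j ≤ y j} ⊆
      {x ∈ S | ¬ ∃ x' ∈ S, ∀ j, f x' j < f x j - eps}) :=
  stmt_17_general S f m M hbox eps heps U hU1 hU2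
end

section
/- Let Q ⊆ [m,M] be a nonempty compact conormal set, let v ∈ [m,M] with v ∉ Q, and let z* ∈ Q be a nearest point of Q to v in the Euclidean norm, i.e. ‖v − z*‖ = d(v,Q). Then z* ∈ v + ℝ₊^p, i.e. v ≤ z* componentwise. -/
/-!
If the nearest point `zs` of a conormal set `Q` to `v` had a coordinate below `v`, raising every
coordinate of `zs` to at least that of `v` would give a point of `Q` (it lies between `zs` and
`M`) that is strictly closer to `v`.
-/

open Finset

lemma dist_max_right_le (z v : ℝ) : dist v (max z v) ≤ dist v z := by
  rcases le_total z v with h | h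
  · simp [max_eq_right h]
  · rw [max_eq_left h]

lemma dist_max_right_lt {z v : ℝ} (h : z < v) : dist v (max z v) < dist v z := by
  simpa [max_eq_right h.le] using h.ne'

namespace EuclideanSpace

variable {ι : Type*}

noncomputable def coordMax (z v : EuclideanSpace ℝ ι) : EuclideanSpace ℝ ι :=
  WithLp.toLp 2 fun i => max (z i) (v i)

lemma dist_coordMax_lt [Fintype ι] {z v : EuclideanSpace ℝ ι} {j : ι} (hj : z j < v j) :
    dist v (coordMax z v) < dist v z := by
  rw [dist_eq, dist_eq]
  refine Real.sqrt_lt_sqrt (by positivity) (sum_lt_sum (fun i _ => ?_) ⟨j, mem_univ j, ?_⟩)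
  · exact pow_le_pow_left₀ dist_nonneg (dist_max_right_le _ _) 2
  · exact pow_lt_pow_left₀ (dist_max_right_lt hj) dist_nonneg two_ne_zero

lemma le_of_dist_eq_infDist_of_coordMax_mem [Fintype ι] {Q : Set (EuclideanSpace ℝ ι)}
    {v zs : EuclideanSpace ℝ ι} (hnear : dist v zs = Metric.infDist v Q)
    (hmax : coordMax zs v ∈ Q) (j : ι) :
    v j ≤ zs j := by
  by_contra! hj
  have hcloser := dist_coordMax_lt hj
  have hinf := Metric.infDist_le_dist_of_mem (x := v) hmax
  linarith

end EuclideanSpace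

theorem stmt_18_general {p : ℕ}
    (m M : EuclideanSpace ℝ (Fin p))
    (Q : Set (EuclideanSpace ℝ (Fin p)))
    (hQsub : Q ⊆ {z : EuclideanSpace ℝ (Fin p) | ∀ j, m j ≤ z j ∧ z j ≤ M j})
    (hQconormal : ∀ y ∈ Q, ∀ z : EuclideanSpace ℝ (Fin p),
      (∀ j, y j ≤ z j) → (∀ j, z j ≤ M j) → z ∈ Q)
    (v : EuclideanSpace ℝ (Fin p)) (hv : ∀ j, m j ≤ v j ∧ v j ≤ M j)
    (zs : EuclideanSpace ℝ (Fin p)) (hzs : zs ∈ Q)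
    (hnear : dist v zs = Metric.infDist v Q) :
    ∀ j, v j ≤ zs j := by
  refine EuclideanSpace.le_of_dist_eq_infDist_of_coordMax_mem hnear
    (hQconormal zs hzs _ (fun i => ?_) fun i => ?_)
  · exact le_max_left _ _
  · exact max_le (hQsub hzs i).2 (hv i).2

theorem stmt_18 {p : ℕ} (hp : 2 ≤ p)
    (m M : EuclideanSpace ℝ (Fin p)) (hmM : ∀ j, m j ≤ M j)
    (Q : Set (EuclideanSpace ℝ (Fin p)))
    (hQsub : Q ⊆ {z : EuclideanSpace ℝ (Fin p) | ∀ j, m j ≤ z j ∧ z j ≤ M j})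
    (hQne : Q.Nonempty) (hQcomp : IsCompact Q)
    (hQconormal : ∀ y ∈ Q, ∀ z : EuclideanSpace ℝ (Fin p),
      (∀ j, y j ≤ z j) → (∀ j, z j ≤ M j) → z ∈ Q)
    (v : EuclideanSpace ℝ (Fin p)) (hv : ∀ j, m j ≤ v j ∧ v j ≤ M j) (hvQ : v ∉ Q)
    (zs : EuclideanSpace ℝ (Fin p)) (hzs : zs ∈ Q)
    (hnear : dist v zs = Metric.infDist v Q) :
    ∀ j, v j ≤ zs j :=
  stmt_18_general m M Q hQsub hQconormal v hv zs hzs hnear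
end
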